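/- Let v > 3√2/4. Define H : (0, π/2) → ℝ by H(x) = 2(v − sin x)(v − cos x) + sin x · cos x · (1 − v(sin x + cos x)). Then H(x) > 0 for all x ∈ (0, π/2). -/

import Mathlib

/-!
With `t = sin x + cos x` one has `2 sin x cos x = t² - 1`, so twice the expression equals the
cubic `4v² - 3vt - vt³ + 3t² - 3`, and `t` ranges over `[1, √2]`. The cubic's value at `t = √2`
is `4 (v - 3√2/4) (v - √2/2)`, positive exactly when `v > 3√2/4`, and its drop from there is `(√2 - t)` times
a factor that is positive as soon as `v > 1` and `t ≥ 1`.
-/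

open Real

lemma one_le_add_of_sq_add_sq_eq_one {s c : ℝ} (hs : 0 ≤ s) (hc : 0 ≤ c)
    (h : s ^ 2 + c ^ 2 = 1) : 1 ≤ s + c := by
  nlinarith [mul_nonneg hs hc]

lemma add_le_sqrt_two_of_sq_add_sq_eq_one {s c : ℝ} (h : s ^ 2 + c ^ 2 = 1) : s + c ≤ √2 :=
  Real.le_sqrt_of_sq_le (by nlinarith [sq_nonneg (s - c)])

lemma one_lt_of_three_mul_sqrt_two_div_four_lt {v : ℝ} (hv : 3 * √2 / 4 < v) : 1 < v := by
  have h : (4 / 3 : ℝ) < √2 := Real.lt_sqrt_of_sq_lt (by norm_num)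
  linarith

lemma cubic_difference_factor_pos {v t : ℝ} (hv : 1 < v) (ht : 1 ≤ t) :
    0 < v * (t ^ 2 + √2 * t + 5) - 3 * (t + √2) := by
  have hr : 1 < √2 := Real.lt_sqrt_of_sq_lt (by norm_num)
  have hr' : √2 < 3 / 2 := (Real.sqrt_lt' (by norm_num)).2 (by norm_num)
  -- `t² + √2 t + 5 - 3 (t + √2) = (t - 1)(t + √2 - 2) + (3 - 2√2)`
  have hbase : 0 < (t ^ 2 + √2 * t + 5) - 3 * (t + √2) := by
    nlinarith [mul_nonneg (sub_nonneg.2 ht) (by linarith : (0 : ℝ) ≤ t + √2 - 2)]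
  nlinarith [mul_pos (sub_pos.2 hv) (by positivity : (0 : ℝ) < t ^ 2 + √2 * t + 5)]

lemma cubic_pos {v t : ℝ} (hv : 3 * √2 / 4 < v) (ht₁ : 1 ≤ t) (ht₂ : t ≤ √2) :
    0 < 4 * v ^ 2 - 3 * v * t - v * t ^ 3 + 3 * t ^ 2 - 3 := by
  have hr : √2 ^ 2 = 2 := Real.sq_sqrt (by norm_num)
  have hend : 0 < 4 * (v - 3 * √2 / 4) * (v - √2 / 2) :=
    mul_pos (by linarith) (by linarith [Real.sqrt_nonneg 2])
  have hdrop : 0 ≤ (√2 - t) * (v * (t ^ 2 + √2 * t + 5) - 3 * (t + √2)) :=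
    mul_nonneg (sub_nonneg.2 ht₂) (cubic_difference_factor_pos (one_lt_of_three_mul_sqrt_two_div_four_lt hv) ht₁).le
  have hsplit : 4 * v ^ 2 - 3 * v * t - v * t ^ 3 + 3 * t ^ 2 - 3 =
      4 * (v - 3 * √2 / 4) * (v - √2 / 2) +
        (√2 - t) * (v * (t ^ 2 + √2 * t + 5) - 3 * (t + √2)) := by
    linear_combination (3 / 2 - v * t) * hr
  linarith

lemma expr_pos_of_sq_add_sq_eq_one {v s c : ℝ} (hv : 3 * √2 / 4 < v) (hs : 0 ≤ s) (hc : 0 ≤ c)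
    (h : s ^ 2 + c ^ 2 = 1) : 0 < 2 * (v - s) * (v - c) + s * c * (1 - v * (s + c)) := by
  have hcubic := cubic_pos hv (one_le_add_of_sq_add_sq_eq_one hs hc h)
    (add_le_sqrt_two_of_sq_add_sq_eq_one h)
  have hreduce : 2 * (2 * (v - s) * (v - c) + s * c * (1 - v * (s + c))) =
      4 * v ^ 2 - 3 * v * (s + c) - v * (s + c) ^ 3 + 3 * (s + c) ^ 2 - 3 := by
    linear_combination (v * (s + c) - 3) * h
  linarith

theorem H_pos (v : ℝ) (hv : 3 * Real.sqrt 2 / 4 < v) :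
    ∀ x ∈ Set.Ioo 0 (π/2),
      0 < 2 * (v - sin x) * (v - cos x) +
        sin x * cos x * (1 - v * (sin x + cos x)) := by
  rintro x ⟨hx₀, hx₁⟩
  have hsin : 0 ≤ sin x := sin_nonneg_of_nonneg_of_le_pi hx₀.le (by linarith [pi_pos])
  have hcos : 0 ≤ cos x := cos_nonneg_of_mem_Icc ⟨by linarith [pi_pos], hx₁.le⟩
  exact expr_pos_of_sq_add_sq_eq_one hv hsin hcos (sin_sq_add_cos_sq x)
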